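/- Let σ > 0, R > 0, K > 0, C₁ > 0, and let φ : ℝ² → ℝ be of class C⁴ with all iterated derivatives of order up to 4 bounded by K. Let e¹ = (1,0), e² = (−1,0), e³ = (0,1), e⁴ = (0,−1). Then there exists a constant C > 0 (depending only on K, σ, R, C₁) such that for every h > 0, every function g : ℝ² → ℝ with sup_{y ∈ ℝ²} |g(y) − φ(y)| ≤ C₁·h², every x ∈ ℝ², every q ∈ ℝ² with |q| ≤ R, and every Δt ∈ (0,1]: (1/Δt)·|(1/4)·∑_{ℓ=1}^{4} g(x + Δt·q + √(2Δt)·σ·e^ℓ) − φ(x) − Δt·((σ²/2)·Δφ(x) + q·∇φ(x))| ≤ C·(Δt + h²/Δt). -/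

import Mathlib

/-!
Expand `φ` by Taylor's formula around the drifted point `z = x + Δt • q`, with spread
`s = √(2Δt) σ`, so that `s² = 2Δt σ²`. In each antipodal pair `z ± s e` the odd-order terms
cancel, so the four-point average of `φ` is `φ z + (s²/4)(∂₁₁φ + ∂₂₂φ)(z) + O(s⁴)`. A first-order
expansion turns `φ z` into `φ x + Δt ∇φ(x)·q + O(Δt²)`, the bound on `D³φ` moves the
second derivatives from `z` back to `x` at cost `O(Δt²)`, and replacing `φ` by `g` costs
`C₁h²`. Dividing the resulting `O(h² + Δt²)` by `Δt` gives the estimate.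
-/

/-- The four unit displacement vectors `e¹ = (1,0)`, `e² = (−1,0)`, `e³ = (0,1)`,
`e⁴ = (0,−1)` of the four-point semi-Lagrangian quadrature. -/
noncomputable def eVec : Fin 4 → ℝ × ℝ := ![(1, 0), (-1, 0), (0, 1), (0, -1)]

section Taylor

variable {E F : Type*} [NormedAddCommGroup E] [NormedSpace ℝ E]
  [NormedAddCommGroup F] [NormedSpace ℝ F]

theorem ContinuousMultilinearMap.map_const_smul {n : ℕ} (A : E [×n]→L[ℝ] F) (c : ℝ) (y : E) :
    A (fun _ ↦ c • y) = c ^ n • A (fun _ ↦ y) := by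
  simpa using A.map_smul_univ (fun _ ↦ c) (fun _ ↦ y)

theorem norm_sub_sum_iteratedFDeriv_le [CompleteSpace F] {f : E → F} {n : ℕ} {M : ℝ}
    (hf : ContDiff ℝ (n + 1) f) (hM : ∀ z, ‖iteratedFDeriv ℝ (n + 1) f z‖ ≤ M) (x y : E) :
    ‖f (x + y) - ∑ k ∈ Finset.range (n + 1),
        (k.factorial : ℝ)⁻¹ • iteratedFDeriv ℝ k f x (fun _ ↦ y)‖
      ≤ (n.factorial : ℝ)⁻¹ * (M * ‖y‖ ^ (n + 1)) := by
  rw [map_add_eq_sum_add_integral_iteratedFDeriv (fun t _ ↦ hf.contDiffAt), add_sub_cancel_left,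
    norm_smul, Real.norm_of_nonneg (by positivity)]
  gcongr
  simpa using intervalIntegral.norm_integral_le_of_norm_le_const (a := 0) (b := 1) fun t ht ↦ by
    obtain ⟨ht0, ht1⟩ : 0 < t ∧ t ≤ 1 := by simpa using ht
    rw [norm_smul, Real.norm_of_nonneg (by bound)]
    calc (1 - t) ^ n * ‖iteratedFDeriv ℝ (n + 1) f (x + t • y) (fun _ ↦ y)‖
        ≤ 1 * (M * ‖y‖ ^ (n + 1)) := by
          gcongr
          · bound
          · exact (ContinuousMultilinearMap.le_opNorm_mul_pow_of_le _ (pi_norm_const_le y)).trans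
              (by gcongr; exact hM _)
      _ = M * ‖y‖ ^ (n + 1) := one_mul _

theorem norm_sub_sub_fderiv_le [CompleteSpace F] {f : E → F} {M : ℝ} (hf : ContDiff ℝ 2 f)
    (hM : ∀ z, ‖iteratedFDeriv ℝ 2 f z‖ ≤ M) (x y : E) :
    ‖f (x + y) - f x - fderiv ℝ f x y‖ ≤ M * ‖y‖ ^ 2 := by
  simpa [Finset.sum_range_succ, sub_sub] using norm_sub_sum_iteratedFDeriv_le (n := 1) hf hM x y

theorem norm_iteratedFDeriv_add_sub_le {f : E → F} {k : ℕ} {M : ℝ} (hf : ContDiff ℝ (k + 1) f)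
    (hM : ∀ z, ‖iteratedFDeriv ℝ (k + 1) f z‖ ≤ M) (x a : E) :
    ‖iteratedFDeriv ℝ k f (x + a) - iteratedFDeriv ℝ k f x‖ ≤ M * ‖a‖ := by
  simpa using Convex.norm_image_sub_le_of_norm_fderiv_le (s := Set.univ)
    (fun z _ ↦ hf.differentiable_iteratedFDeriv (by norm_cast; omega) z)
    (fun z _ ↦ norm_fderiv_iteratedFDeriv.trans_le (hM z)) convex_univ (Set.mem_univ x)
    (Set.mem_univ (x + a))

theorem norm_add_add_sub_sub_iteratedFDeriv_two_le [CompleteSpace F] {f : E → F} {M : ℝ}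
    (hf : ContDiff ℝ 4 f) (hM : ∀ z, ‖iteratedFDeriv ℝ 4 f z‖ ≤ M) (x y : E) :
    ‖f (x + y) + f (x - y) - (2 : ℝ) • f x - iteratedFDeriv ℝ 2 f x (fun _ ↦ y)‖
      ≤ M * ‖y‖ ^ 4 / 3 := by
  have hpos := norm_sub_sum_iteratedFDeriv_le (n := 3) hf hM x y
  have hneg := norm_sub_sum_iteratedFDeriv_le (n := 3) hf hM x (-y)
  rw [norm_neg, ← sub_eq_add_neg] at hneg
  set Tpos := ∑ k ∈ Finset.range (3 + 1),
    (k.factorial : ℝ)⁻¹ • iteratedFDeriv ℝ k f x (fun _ ↦ y)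
  set Tneg := ∑ k ∈ Finset.range (3 + 1),
    (k.factorial : ℝ)⁻¹ • iteratedFDeriv ℝ k f x (fun _ ↦ -y)
  -- the odd-order terms of the two Taylor polynomials cancel
  have hsum : Tpos + Tneg = (2 : ℝ) • f x + iteratedFDeriv ℝ 2 f x (fun _ ↦ y) := by
    have hneg_y (k : ℕ) : iteratedFDeriv ℝ k f x (fun _ ↦ -y)
        = (-1 : ℝ) ^ k • iteratedFDeriv ℝ k f x (fun _ ↦ y) := by
      simpa using (iteratedFDeriv ℝ k f x).map_const_smul (-1) y
    simp only [Tpos, Tneg, Finset.sum_range_succ, Finset.sum_range_zero, hneg_y]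
    norm_num [Nat.factorial]
    module
  calc ‖f (x + y) + f (x - y) - (2 : ℝ) • f x - iteratedFDeriv ℝ 2 f x (fun _ ↦ y)‖
      = ‖(f (x + y) - Tpos) + (f (x - y) - Tneg)‖ := by
        rw [sub_sub, ← hsum]
        abel_nf
    _ ≤ (Nat.factorial 3 : ℝ)⁻¹ * (M * ‖y‖ ^ 4) + (Nat.factorial 3 : ℝ)⁻¹ * (M * ‖y‖ ^ 4) :=
        (norm_add_le _ _).trans (add_le_add hpos hneg)
    _ = M * ‖y‖ ^ 4 / 3 := by norm_num [Nat.factorial]; ring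

end Taylor

noncomputable def coordLaplacian (φ : ℝ × ℝ → ℝ) (y : ℝ × ℝ) : ℝ :=
  iteratedFDeriv ℝ 2 φ y ![(1, 0), (1, 0)] + iteratedFDeriv ℝ 2 φ y ![(0, 1), (0, 1)]

theorem abs_sum_eVec_sub_coordLaplacian_le {φ : ℝ × ℝ → ℝ} {M : ℝ} (hφ : ContDiff ℝ 4 φ)
    (hM : ∀ z, ‖iteratedFDeriv ℝ 4 φ z‖ ≤ M) (z : ℝ × ℝ) (s : ℝ) :
    |∑ ℓ, φ (z + s • eVec ℓ) - 4 * φ z - s ^ 2 * coordLaplacian φ z| ≤ 2 / 3 * M * s ^ 4 := by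
  have hpair (u : ℝ × ℝ) (hu : ‖u‖ = 1) :
      |φ (z + s • u) + φ (z - s • u) - 2 * φ z - s ^ 2 * iteratedFDeriv ℝ 2 φ z ![u, u]|
        ≤ M * s ^ 4 / 3 := by
    have := norm_add_add_sub_sub_iteratedFDeriv_two_le hφ hM z (s • u)
    rw [ContinuousMultilinearMap.map_const_smul, norm_smul, hu, mul_one, Real.norm_eq_abs s,
      Even.pow_abs (by decide)] at this
    simpa [Matrix.vecCons_const, Matrix.vec_single_eq_const] using this
  have hsum : ∑ ℓ, φ (z + s • eVec ℓ)
      = φ (z + s • (1, 0)) + φ (z - s • (1, 0)) + (φ (z + s • (0, 1)) + φ (z - s • (0, 1))) := by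
    simp [Fin.sum_univ_four, eVec, sub_eq_add_neg]
    ring
  obtain ⟨h₁, h₁'⟩ := abs_le.mp (hpair (1, 0) (by simp))
  obtain ⟨h₂, h₂'⟩ := abs_le.mp (hpair (0, 1) (by simp))
  rw [hsum, coordLaplacian, abs_le]
  constructor <;> linarith

theorem abs_coordLaplacian_add_sub_le {φ : ℝ × ℝ → ℝ} {M : ℝ} (hφ : ContDiff ℝ 3 φ)
    (hM : ∀ z, ‖iteratedFDeriv ℝ 3 φ z‖ ≤ M) (x a : ℝ × ℝ) :
    |coordLaplacian φ (x + a) - coordLaplacian φ x| ≤ 2 * (M * ‖a‖) := by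
  have hD2 := norm_iteratedFDeriv_add_sub_le (k := 2) hφ hM x a
  have hdiag (u : ℝ × ℝ) (hu : ‖u‖ ≤ 1) :
      |iteratedFDeriv ℝ 2 φ (x + a) ![u, u] - iteratedFDeriv ℝ 2 φ x ![u, u]| ≤ M * ‖a‖ := by
    have := ContinuousMultilinearMap.le_opNorm_mul_pow_of_le
      (iteratedFDeriv ℝ 2 φ (x + a) - iteratedFDeriv ℝ 2 φ x) ((pi_norm_const_le u).trans hu)
    rw [one_pow, mul_one] at this
    simpa [Matrix.vecCons_const, Matrix.vec_single_eq_const] using this.trans hD2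
  obtain ⟨h₁, h₁'⟩ := abs_le.mp (hdiag (1, 0) (by simp))
  obtain ⟨h₂, h₂'⟩ := abs_le.mp (hdiag (0, 1) (by simp))
  rw [coordLaplacian, coordLaplacian, abs_le]
  constructor <;> linarith

theorem abs_semiLagrangian_consistency_error_le {σ R K ε Δt : ℝ} {φ g : ℝ × ℝ → ℝ}
    (hφ : ContDiff ℝ 4 φ) (hbd : ∀ k : ℕ, k ≤ 4 → ∀ x : ℝ × ℝ, ‖iteratedFDeriv ℝ k φ x‖ ≤ K)
    (hg : ∀ y, |g y - φ y| ≤ ε) (x : ℝ × ℝ) {q : ℝ × ℝ} (hq : ‖q‖ ≤ R) (hΔt : 0 ≤ Δt) :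
    |(1 / 4) * ∑ ℓ : Fin 4, g (x + Δt • q + (Real.sqrt (2 * Δt) * σ) • eVec ℓ) - φ x
        - Δt * ((σ ^ 2 / 2) * coordLaplacian φ x + fderiv ℝ φ x q)|
      ≤ ε + K * (2 / 3 * σ ^ 4 + R ^ 2 + σ ^ 2 * R) * Δt ^ 2 := by
  set z := x + Δt • q
  set s := Real.sqrt (2 * Δt) * σ
  have hK : 0 ≤ K := (norm_nonneg _).trans (hbd 0 (by norm_num) x)
  have hs2 : s ^ 2 = 2 * Δt * σ ^ 2 := by rw [mul_pow, Real.sq_sqrt (by positivity)]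
  have hshift : ‖Δt • q‖ ≤ Δt * R := by
    rw [norm_smul, Real.norm_of_nonneg hΔt]; gcongr
  have hinterp : |∑ ℓ, g (z + s • eVec ℓ) - ∑ ℓ, φ (z + s • eVec ℓ)| ≤ 4 * ε := by
    rw [← Finset.sum_sub_distrib]
    refine (Finset.abs_sum_le_sum_abs _ _).trans ?_
    exact (Finset.sum_le_sum fun ℓ _ ↦ hg (z + s • eVec ℓ)).trans_eq (by simp)
  have hquad := abs_sum_eVec_sub_coordLaplacian_le hφ (hbd 4 le_rfl) z s
  have hdrift : |φ z - φ x - Δt * fderiv ℝ φ x q| ≤ K * (Δt * R) ^ 2 := by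
    simpa using (norm_sub_sub_fderiv_le (hφ.of_le (by norm_num)) (hbd 2 (by norm_num)) x
      (Δt • q)).trans (by gcongr)
  have hdiffusion : |Δt * σ ^ 2 / 2 * (coordLaplacian φ z - coordLaplacian φ x)|
      ≤ Δt * σ ^ 2 / 2 * (2 * (K * (Δt * R))) := by
    rw [abs_mul, abs_of_nonneg (by positivity)]
    gcongr
    exact (abs_coordLaplacian_add_sub_le (hφ.of_le (by norm_num)) (hbd 3 (by norm_num)) x
      (Δt • q)).trans (by gcongr)
  calc _ = |(∑ ℓ, g (z + s • eVec ℓ) - ∑ ℓ, φ (z + s • eVec ℓ)) / 4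
        + (∑ ℓ, φ (z + s • eVec ℓ) - 4 * φ z - s ^ 2 * coordLaplacian φ z) / 4
        + (φ z - φ x - Δt * fderiv ℝ φ x q)
        + Δt * σ ^ 2 / 2 * (coordLaplacian φ z - coordLaplacian φ x)| := by
        simp only [z, s]
        rw [hs2]
        ring_nf
    _ ≤ |∑ ℓ, g (z + s • eVec ℓ) - ∑ ℓ, φ (z + s • eVec ℓ)| / 4
        + |∑ ℓ, φ (z + s • eVec ℓ) - 4 * φ z - s ^ 2 * coordLaplacian φ z| / 4
        + |φ z - φ x - Δt * fderiv ℝ φ x q|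
        + |Δt * σ ^ 2 / 2 * (coordLaplacian φ z - coordLaplacian φ x)| := by
        refine ((abs_add_le _ _).trans (add_le_add_left ((abs_add_le _ _).trans
          (add_le_add_left (abs_add_le _ _) _)) _)).trans_eq ?_
        rw [abs_div, abs_div, abs_of_pos (by norm_num : (0 : ℝ) < 4)]
    _ ≤ ε + K * (2 / 3 * σ ^ 4 + R ^ 2 + σ ^ 2 * R) * Δt ^ 2 := by
        have hs4 : s ^ 4 = 4 * Δt ^ 2 * σ ^ 4 := by
          rw [show s ^ 4 = (s ^ 2) ^ 2 by ring, hs2]; ring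
        rw [hs4] at hquad
        linarith

theorem stmt_9_general (σ R K C₁ : ℝ) (hR : 0 < R) (hK : 0 < K) (hC₁ : 0 < C₁)
    (φ : ℝ × ℝ → ℝ) (hφ : ContDiff ℝ 4 φ)
    (hbd : ∀ k : ℕ, k ≤ 4 → ∀ x : ℝ × ℝ, ‖iteratedFDeriv ℝ k φ x‖ ≤ K) :
    ∃ C > 0, ∀ (h : ℝ), 0 < h → ∀ g : ℝ × ℝ → ℝ,
      (∀ y : ℝ × ℝ, |g y - φ y| ≤ C₁ * h ^ 2) →
      ∀ (x q : ℝ × ℝ) (Δt : ℝ), ‖q‖ ≤ R → 0 < Δt → Δt ≤ 1 →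
        (1 / Δt) *
            |(1 / 4) * ∑ ℓ : Fin 4, g (x + Δt • q + (Real.sqrt (2 * Δt) * σ) • eVec ℓ)
              - φ x
              - Δt * ((σ ^ 2 / 2) *
                    (iteratedFDeriv ℝ 2 φ x ![(1, 0), (1, 0)] +
                      iteratedFDeriv ℝ 2 φ x ![(0, 1), (0, 1)]) +
                  fderiv ℝ φ x q)| ≤ C * (Δt + h ^ 2 / Δt) := by
  set B := K * (2 / 3 * σ ^ 4 + R ^ 2 + σ ^ 2 * R)
  have hB : 0 < B := by positivity
  refine ⟨C₁ + B, by positivity, fun h _ g hg x q Δt hq hΔt _ ↦ ?_⟩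
  have herr := abs_semiLagrangian_consistency_error_le (σ := σ) hφ hbd hg x hq hΔt.le
  have hh2 : 0 ≤ h ^ 2 / Δt := by positivity
  calc _ ≤ (1 / Δt) * (C₁ * h ^ 2 + B * Δt ^ 2) :=
        mul_le_mul_of_nonneg_left herr (by positivity)
    _ = C₁ * (h ^ 2 / Δt) + B * Δt := by field_simp
    _ ≤ (C₁ + B) * (Δt + h ^ 2 / Δt) := by nlinarith

/-- Consistency error estimate of the semi-Lagrangian scheme: if `φ` is `C⁴` with
derivatives of order up to 4 bounded by `K`, and `g` is uniformly within `C₁·h²` of `φ`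
(e.g. the piecewise linear interpolant of `φ`), then the scheme's consistency error is
of order `O(Δt + h²/Δt)`. -/
theorem stmt_9 (σ R K C₁ : ℝ) (hσ : 0 < σ) (hR : 0 < R) (hK : 0 < K) (hC₁ : 0 < C₁)
    (φ : ℝ × ℝ → ℝ) (hφ : ContDiff ℝ 4 φ)
    (hbd : ∀ k : ℕ, k ≤ 4 → ∀ x : ℝ × ℝ, ‖iteratedFDeriv ℝ k φ x‖ ≤ K) :
    ∃ C > 0, ∀ (h : ℝ), 0 < h → ∀ g : ℝ × ℝ → ℝ,
      (∀ y : ℝ × ℝ, |g y - φ y| ≤ C₁ * h ^ 2) →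
      ∀ (x q : ℝ × ℝ) (Δt : ℝ), ‖q‖ ≤ R → 0 < Δt → Δt ≤ 1 →
        (1 / Δt) *
            |(1 / 4) * ∑ ℓ : Fin 4, g (x + Δt • q + (Real.sqrt (2 * Δt) * σ) • eVec ℓ)
              - φ x
              - Δt * ((σ ^ 2 / 2) *
                    (iteratedFDeriv ℝ 2 φ x ![(1, 0), (1, 0)] +
                      iteratedFDeriv ℝ 2 φ x ![(0, 1), (0, 1)]) +
                  fderiv ℝ φ x q)| ≤ C * (Δt + h ^ 2 / Δt) :=
  stmt_9_general σ R K C₁ hR hK hC₁ φ hφ hbd
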